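/- arXiv:1711.09000 — 3 statements merged into one kernel-verified Lean document; each statement's English description precedes it below -/
import Mathlib

section
/- Let ã = M₁₂²M₂₂², b̃ = -2M₁₁M₂₂M₁₂M₂₁, c̃ = M₂₁²M₁₂² + M₁₁²M₂₂² - M₁₂²M₂₂², with M₁₁ = -6γ/(5a²), M₂₁ = 6γ/(5a²), M₁₂ = M₂₂ = -6πΩ²/(a sinh(Ωπ)) for a < 0, γ > 0, Ω > 0. Then the condition |(-b̃ + √(b̃² - 4ãc̃))/(2ã)| < 1 is equivalent to γ·|sinh(Ωπ)| < -5aΩ²π. -/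
open Real
set_option maxHeartbeats 1000000

theorem melnikov_plus_root_condition
    (a γ Ω M₁₁ M₂₁ M₁₂ M₂₂ aQ bQ cQ : ℝ)
    (ha : a < 0) (hγ : 0 < γ) (hΩ : 0 < Ω)
    (hM₁₁ : M₁₁ = -6 * γ / (5 * a^2))
    (hM₂₁ : M₂₁ = 6 * γ / (5 * a^2))
    (hM₁₂ : M₁₂ = -6 * π * Ω^2 / (a * Real.sinh (Ω * π)))
    (hM₂₂ : M₂₂ = -6 * π * Ω^2 / (a * Real.sinh (Ω * π)))
    (haQ : aQ = M₁₂^2 * M₂₂^2)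
    (hbQ : bQ = -2 * M₁₁ * M₂₂ * M₁₂ * M₂₁)
    (hcQ : cQ = M₂₁^2 * M₁₂^2 + M₁₁^2 * M₂₂^2 - M₁₂^2 * M₂₂^2) :
    |(-bQ + Real.sqrt (bQ^2 - 4 * aQ * cQ)) / (2 * aQ)| < 1 ↔
      γ * |Real.sinh (Ω * π)| < -5 * a * Ω^2 * π := by
  have hpi := Real.pi_pos
  have hΩπ : 0 < Ω * π := by positivity
  have hs : 0 < Real.sinh (Ω * π) := by
    exact Real.sinh_pos_iff.mpr hΩπ
  set s := Real.sinh (Ω * π) with hsdef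
  clear_value s
  have ha' : a ≠ 0 := ne_of_lt ha
  have has : a * s < 0 := mul_neg_of_neg_of_pos ha hs
  have hK : 0 < M₁₂ := by
    rw [hM₁₂]
    exact div_pos_of_neg_of_neg (by nlinarith [mul_pos hpi (pow_pos hΩ 2)]) has
  have hm : 0 < M₂₁ := by rw [hM₂₁]; positivity
  have hM11 : M₁₁ = -M₂₁ := by rw [hM₁₁, hM₂₁]; ring
  have h22 : M₂₂ = M₁₂ := by rw [hM₂₂, hM₁₂]
  set m := M₂₁ with hmdef
  set K := M₁₂ with hKdef
  clear_value m K
  have hsqrt : Real.sqrt (bQ^2 - 4 * aQ * cQ) = 2*K^2*|m^2-K^2| := by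
    have hd : bQ^2 - 4 * aQ * cQ = (2*K^2*(m^2-K^2))^2 := by
      rw [haQ, hbQ, hcQ, h22, hM11]; ring
    rw [hd, Real.sqrt_sq_eq_abs, abs_mul,
      abs_of_pos (by positivity : (0:ℝ) < 2*K^2)]
  have key : |(-bQ + Real.sqrt (bQ^2 - 4 * aQ * cQ)) / (2 * aQ)| < 1 ↔ m < K := by
    rcases lt_or_ge m K with h | h
    · have hm2 : m^2 < K^2 := by nlinarith [mul_pos hm hK]
      have habs : |m^2 - K^2| = K^2 - m^2 := by
        rw [abs_of_neg (by linarith)]; ring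
      rw [hsqrt, habs, hbQ, haQ, h22, hM11]
      have hpos : (0:ℝ) < 2 * (K^2 * K^2) := by positivity
      constructor
      · intro _; exact h
      · intro _
        rw [abs_lt]
        constructor
        · rw [lt_div_iff₀ hpos]
          nlinarith [mul_pos (mul_pos hm hm) (mul_pos hK hK),
            mul_pos (pow_pos hK 2) (sub_pos.mpr hm2)]
        · rw [div_lt_one hpos]
          nlinarith [mul_pos (mul_pos hm hm) (mul_pos hK hK)]
    · have habs : |m^2 - K^2| = m^2 - K^2 := abs_of_nonneg (by nlinarith)
      have hval : (-bQ + Real.sqrt (bQ^2 - 4 * aQ * cQ)) / (2 * aQ) = -1 := by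
        rw [hsqrt, habs, hbQ, haQ, h22, hM11]
        have hne : (2:ℝ) * (K^2 * K^2) ≠ 0 := by positivity
        field_simp
        ring
      rw [hval]
      simp only [abs_neg, abs_one]
      constructor
      · intro hc; linarith
      · intro hc; exact absurd hc (not_lt.mpr h)
  rw [key, abs_of_pos hs]
  have hK' : K = 6 * π * Ω^2 / (-(a * s)) := by
    rw [hM₁₂, div_neg, ← neg_div]; ring_nf
  rw [hM₂₁, hK',
    div_lt_div_iff₀ (by positivity : (0:ℝ) < 5 * a^2) (by linarith : (0:ℝ) < -(a * s))]
  have h6a : (0:ℝ) < -(6 * a) := by linarith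
  constructor
  · intro h
    have h2 : (-(6 * a)) * (γ * s) < (-(6 * a)) * (-5 * a * Ω^2 * π) := by nlinarith [h]
    exact (mul_lt_mul_iff_right₀ h6a).mp h2
  · intro h
    have h2 := (mul_lt_mul_iff_right₀ h6a).mpr h
    nlinarith [h2]
end

section
/- Let a < 0, γ > 0, Ω > 0 and set M₁₁ = -6γ/(5a²), M₂₁ = 6γ/(5a²), M₁₂ = M₂₂ = -6πΩ²/(a sinh(Ωπ)). With ã = M₁₂²M₂₂², b̃ = -2M₁₁M₂₂M₁₂M₂₁, c̃ = M₂₁²M₁₂² + M₁₁²M₂₂² - M₁₂²M₂₂², the condition |(-b̃ - √(b̃² - 4ãc̃))/(2ã)| < 1 never holds (the minus-sign root always has absolute value ≥ 1 whenever b̃² - 4ãc̃ ≥ 0). -/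
open Real

theorem melnikov_minus_root_never_small
    (a γ Ω M₁₁ M₂₁ M₁₂ M₂₂ aQ bQ cQ : ℝ)
    (ha : a < 0) (hγ : 0 < γ) (hΩ : 0 < Ω)
    (hM₁₁ : M₁₁ = -6 * γ / (5 * a^2))
    (hM₂₁ : M₂₁ = 6 * γ / (5 * a^2))
    (hM₁₂ : M₁₂ = -6 * π * Ω^2 / (a * Real.sinh (Ω * π)))
    (hM₂₂ : M₂₂ = -6 * π * Ω^2 / (a * Real.sinh (Ω * π)))
    (haQ : aQ = M₁₂^2 * M₂₂^2)
    (hbQ : bQ = -2 * M₁₁ * M₂₂ * M₁₂ * M₂₁)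
    (hcQ : cQ = M₂₁^2 * M₁₂^2 + M₁₁^2 * M₂₂^2 - M₁₂^2 * M₂₂^2)
    (hdisc : bQ^2 - 4 * aQ * cQ ≥ 0) :
    ¬ |(-bQ - Real.sqrt (bQ^2 - 4 * aQ * cQ)) / (2 * aQ)| < 1 := by
  have hsinh : 0 < Real.sinh (Ω * π) := Real.sinh_pos_iff.mpr (by positivity)
  have hden : a * Real.sinh (Ω * π) < 0 := mul_neg_of_neg_of_pos ha hsinh
  have hs : 0 < M₂₂ := by
    rw [hM₂₂]
    exact div_pos_of_neg_of_neg (by nlinarith [mul_pos Real.pi_pos (pow_pos hΩ 2)]) hden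
  have ha2 : (0:ℝ) < a^2 := by nlinarith
  have hm : 0 < M₂₁ := by rw [hM₂₁]; exact div_pos (by linarith) (by linarith)
  have h11 : M₁₁ = -M₂₁ := by rw [hM₁₁, hM₂₁]; ring
  have h12 : M₁₂ = M₂₂ := by rw [hM₁₂, hM₂₂]
  have hdeq : bQ^2 - 4 * aQ * cQ = (2 * M₂₂^2 * (M₂₁^2 - M₂₂^2))^2 := by
    rw [haQ, hbQ, hcQ, h11, h12]; ring
  have hsqrt : Real.sqrt (bQ^2 - 4 * aQ * cQ) = |2 * M₂₂^2 * (M₂₁^2 - M₂₂^2)| := by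
    rw [hdeq, Real.sqrt_sq_eq_abs]
  push_neg
  rw [hsqrt]
  rcases le_or_gt (M₂₂^2) (M₂₁^2) with hcase | hcase
  · have habs : |2 * M₂₂^2 * (M₂₁^2 - M₂₂^2)| = 2 * M₂₂^2 * (M₂₁^2 - M₂₂^2) := by
      apply abs_of_nonneg; nlinarith
    rw [habs]
    have hx : (-bQ - 2 * M₂₂^2 * (M₂₁^2 - M₂₂^2)) / (2 * aQ)
        = (M₂₂^2 - 2 * M₂₁^2) / M₂₂^2 := by
      rw [haQ, hbQ, h11, h12]
      field_simp
      ring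
    rw [hx]
    have h1 : 1 ≤ (2 * M₂₁^2 - M₂₂^2) / M₂₂^2 := by
      rw [le_div_iff₀ (by positivity)]; nlinarith
    calc (1:ℝ) ≤ (2 * M₂₁^2 - M₂₂^2) / M₂₂^2 := h1
      _ = -((M₂₂^2 - 2 * M₂₁^2) / M₂₂^2) := by ring
      _ ≤ |(M₂₂^2 - 2 * M₂₁^2) / M₂₂^2| := neg_le_abs _
  · have habs : |2 * M₂₂^2 * (M₂₁^2 - M₂₂^2)| = 2 * M₂₂^2 * (M₂₂^2 - M₂₁^2) := by
      rw [abs_of_nonpos (by nlinarith)]; ring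
    rw [habs]
    have hx : (-bQ - 2 * M₂₂^2 * (M₂₂^2 - M₂₁^2)) / (2 * aQ) = -1 := by
      rw [haQ, hbQ, h11, h12]
      field_simp
      ring
    rw [hx]
    simp
end

section
/- For γ > 0, a < 0, Ω > 0, if γ sinh(Ωπ) < -5aΩ²π, then the quadratic equation ã x² + b̃ x + c̃ = 0 with ã = M₁₂²M₂₂², b̃ = -2M₁₁M₂₂M₁₂M₂₁, c̃ = M₂₁²M₁₂² + M₁₁²M₂₂² - M₁₂²M₂₂² (where M₁₁ = -6γ/(5a²), M₂₁ = 6γ/(5a²), M₁₂ = M₂₂ = -6πΩ²/(a sinh Ωπ)) has a real root x with |x| < 1, and consequently the equation cos(Ωη) = x has infinitely many solutions η with sin(Ωη) ≠ 0. -/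
open Real

/-!
Writing `k = 6γ/(5a²)` and `p = -6πΩ²/(a sinh Ωπ)`, the matrix entries are `M₁₁ = -k`, `M₂₁ = k`,
`M₁₂ = M₂₂ = p`, and the quadratic becomes `p²(x + 1)(p²x - (p² - 2k²)) = 0`. Its root
`x = 1 - 2(k/p)²` lies in `(-1, 1)` exactly when `0 < k < p`, and the hypothesis on `sinh Ωπ` is
precisely `k < p`. Every `η = (arccos x + 2πn)/Ω` then solves `cos (Ωη) = x`, and
`sin (Ωη) = √(1 - x²) ≠ 0`.
-/

lemma abs_one_sub_two_mul_sq_lt_one {r : ℝ} (h₀ : r ≠ 0) (h₁ : |r| < 1) :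
    |1 - 2 * r ^ 2| < 1 := by
  have hr2 : r ^ 2 < 1 := by rwa [sq_lt_one_iff_abs_lt_one]
  have hr2_pos : 0 < r ^ 2 := by positivity
  rw [abs_lt]
  constructor <;> linarith

lemma infinite_setOf_cos_mul_eq_and_sin_mul_ne_zero {Ω x : ℝ} (hΩ : Ω ≠ 0) (hx : |x| < 1) :
    {η : ℝ | cos (Ω * η) = x ∧ sin (Ω * η) ≠ 0}.Infinite := by
  obtain ⟨hx₁, hx₂⟩ := abs_lt.1 hx
  have hsin : sin (arccos x) ≠ 0 := by
    rw [sin_arccos]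
    exact (sqrt_pos.2 (by nlinarith)).ne'
  refine Set.infinite_of_injective_forall_mem (α := ℕ)
    (f := fun n => (arccos x + n * (2 * π)) / Ω) (fun m n h => ?_) (fun n => ?_)
  · have h' : (m : ℝ) * (2 * π) = n * (2 * π) := by
      simpa [div_left_inj' hΩ] using h
    exact_mod_cast mul_right_cancel₀ (by positivity) h'
  · simp only [Set.mem_ofPred_eq, mul_div_cancel₀ _ hΩ, cos_add_nat_mul_two_pi,
      sin_add_nat_mul_two_pi, cos_arccos hx₁.le hx₂.le, true_and]
    exact hsin

lemma div_lt_neg_div_of_mul_sinh_lt {a γ Ω : ℝ} (ha : a < 0) (hΩ : 0 < Ω)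
    (hcond : γ * sinh (Ω * π) < -5 * a * Ω ^ 2 * π) :
    6 * γ / (5 * a ^ 2) < -6 * π * Ω ^ 2 / (a * sinh (Ω * π)) := by
  have hs : 0 < sinh (Ω * π) := sinh_pos_iff.2 (by positivity)
  rw [← neg_div_neg_eq (-6 * π * Ω ^ 2), div_lt_div_iff₀ (by nlinarith) (by nlinarith)]
  nlinarith

theorem melnikov_quadratic_root_exists
    (a γ Ω M₁₁ M₂₁ M₁₂ M₂₂ aQ bQ cQ : ℝ)
    (hγ : 0 < γ) (ha : a < 0) (hΩ : 0 < Ω)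
    (hcond : γ * Real.sinh (Ω * π) < -5 * a * Ω^2 * π)
    (hM₁₁ : M₁₁ = -6 * γ / (5 * a^2))
    (hM₂₁ : M₂₁ = 6 * γ / (5 * a^2))
    (hM₁₂ : M₁₂ = -6 * π * Ω^2 / (a * Real.sinh (Ω * π)))
    (hM₂₂ : M₂₂ = -6 * π * Ω^2 / (a * Real.sinh (Ω * π)))
    (haQ : aQ = M₁₂^2 * M₂₂^2)
    (hbQ : bQ = -2 * M₁₁ * M₂₂ * M₁₂ * M₂₁)
    (hcQ : cQ = M₂₁^2 * M₁₂^2 + M₁₁^2 * M₂₂^2 - M₁₂^2 * M₂₂^2) :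
    ∃ x : ℝ, aQ * x^2 + bQ * x + cQ = 0 ∧ |x| < 1 ∧
      {η : ℝ | Real.cos (Ω * η) = x ∧ Real.sin (Ω * η) ≠ 0}.Infinite := by
  set k := 6 * γ / (5 * a ^ 2)
  set p := -6 * π * Ω ^ 2 / (a * sinh (Ω * π))
  have hk : 0 < k := div_pos (by positivity) (by nlinarith)
  have hkp : k < p := div_lt_neg_div_of_mul_sinh_lt ha hΩ hcond
  have hp : 0 < p := hk.trans hkp
  have hx : |1 - 2 * (k / p) ^ 2| < 1 := by
    refine abs_one_sub_two_mul_sq_lt_one (div_pos hk hp).ne' ?_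
    rwa [abs_of_pos (div_pos hk hp), div_lt_one hp]
  refine ⟨1 - 2 * (k / p) ^ 2, ?_, hx, infinite_setOf_cos_mul_eq_and_sin_mul_ne_zero hΩ.ne' hx⟩
  have hM₁₁' : M₁₁ = -k := by rw [hM₁₁]; ring
  rw [haQ, hbQ, hcQ, hM₁₁', hM₂₁, hM₁₂, hM₂₂]
  field_simp
  ring
end
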